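/- Let H be a complex Hilbert space and let B ⊆ B(H) be a unital closed *-subalgebra acting irreducibly on H, i.e., the only bounded operators on H commuting with every element of B are the scalar multiples of the identity. Then the identity map id : B → B is pure in the cone CP(B, B) of completely positive linear maps: whenever ϑ, ω : B → B are completely positive linear maps with ϑ + ω = id, there exists s ∈ [0,1] such that ϑ = s·id and ω = (1−s)·id. (This is the key step in the proof that the identity map on an AW*-factor is pure.) -/

import Mathlib

open scoped ComplexOrder InnerProductSpace

/-- An `m × m` matrix of operators on a Hilbert space `H` is positive if the
corresponding operator on the direct sum `H^{⊕m}` is positive, i.e. its quadratic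
form is nonnegative. -/
def OpMatPos {H : Type*} [NormedAddCommGroup H] [InnerProductSpace ℂ H] {m : ℕ}
    (x : Fin m → Fin m → (H →L[ℂ] H)) : Prop :=
  ∀ v : Fin m → H, 0 ≤ ∑ i, ∑ j, ⟪x i j (v j), v i⟫_ℂ

/-- Complete positivity for a linear map from a subspace `S ⊆ B(H)` into `B(H)`:
positive `m × m` operator matrices with entries in `S` are sent (entrywise) to
positive operator matrices. -/
def IsCPop {H : Type*} [NormedAddCommGroup H] [InnerProductSpace ℂ H]
    (S : Submodule ℂ (H →L[ℂ] H)) (φ : S →ₗ[ℂ] (H →L[ℂ] H)) : Prop :=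
  ∀ (m : ℕ) (x : Fin m → Fin m → S),
    OpMatPos (fun i j => (x i j : H →L[ℂ] H)) →
    OpMatPos (fun i j => φ (x i j))

/-! Let `ϑ + ω = id` with `ϑ, ω` completely positive. For `a ∈ B`, the Gram matrix
`[star cᵢ * cⱼ]` of `c = (a, 1)` is positive, and the quadratic form of its image under `ϑ` is
squeezed between `0` and the form of the Gram matrix itself, which vanishes at `(ξ, -a ξ)`.
A nonnegative sesquilinear form that vanishes at a vector on the diagonal vanishes against every
vector, and this yields `ϑ a = ϑ 1 * a` and `ϑ (star a) = star a * ϑ 1`. Hence `ϑ 1` commutes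
with `B`, so it is a scalar by irreducibility, and `0 ≤ ϑ 1 ≤ 1` puts that scalar in `[0, 1]`. -/

open scoped ComplexConjugate

theorem Complex.eq_zero_of_forall_nonneg_linear_add_quadratic {Y Z C : ℂ}
    (h : ∀ t : ℂ, 0 ≤ t * Y + conj t * Z + conj t * t * C) : Y = 0 ∧ Z = 0 := by
  have him (t : ℂ) : (t * Y + conj t * Z + conj t * t * C).im = 0 :=
    (Complex.le_def.mp (h t)).2.symm
  have h1 := him 1
  have h2 := him (-1)
  have h3 := him I
  simp only [add_im, mul_im, mul_re, conj_re, conj_im, one_re, one_im, neg_re, neg_im, I_re,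
    I_im] at h1 h2 h3
  have hCim : C.im = 0 := by linarith
  have hZre : Z.re = Y.re := by linarith
  have hZim : Z.im = -Y.im := by linarith
  have hZ : Z = conj Y := Complex.ext (by simp [hZre]) (by simp [hZim])
  -- at `t = -ε conj Y` the form is `ε |Y|² (ε C.re - 2)`, negative for small `ε` unless `Y = 0`
  set ε := 1 / (|C.re| + 1)
  have hε : 0 < ε := by positivity
  have hεC : ε * C.re ≤ 1 := by
    rw [one_div_mul_eq_div, div_le_one (by positivity)]
    linarith [le_abs_self C.re]
  have key := (Complex.le_def.mp (h (-(ε : ℂ) * conj Y))).1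
  simp only [add_re, mul_re, mul_im, conj_re, conj_im, neg_re, neg_im, ofReal_re, ofReal_im,
    hZre, hZim, hCim, zero_re] at key
  have hkey : 0 ≤ ε * normSq Y * (ε * C.re - 2) := by
    rw [normSq_apply]
    linarith
  have hnormSq : ε * normSq Y ≤ 0 := by
    nlinarith [mul_nonneg hε.le (normSq_nonneg Y)]
  have hY : Y = 0 := normSq_eq_zero.1 <|
    le_antisymm (nonpos_of_mul_nonpos_right hnormSq hε) (normSq_nonneg Y)
  exact ⟨hY, by rw [hZ, hY, map_zero]⟩

theorem LinearMap.IsNonneg.apply_eq_zero_of_apply_self_eq_zero {E : Type*} [AddCommGroup E]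
    [Module ℂ E] {q : E →ₗ⋆[ℂ] E →ₗ[ℂ] ℂ} (hq : q.IsNonneg) {v : E} (hv : q v v = 0) (u : E) :
    q v u = 0 ∧ q u v = 0 := by
  refine Complex.eq_zero_of_forall_nonneg_linear_add_quadratic (C := q u u) fun t => ?_
  simpa [hv, mul_add, mul_assoc, add_assoc] using hq.nonneg (v + t • u)

section

variable {H : Type*} [NormedAddCommGroup H] [InnerProductSpace ℂ H] {m : ℕ}

noncomputable def opMatForm (x : Fin m → Fin m → (H →L[ℂ] H)) :
    (Fin m → H) →ₗ⋆[ℂ] (Fin m → H) →ₗ[ℂ] ℂ :=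
  ∑ i, ∑ j, ((innerₛₗ ℂ).comp ((x i j : H →ₗ[ℂ] H) ∘ₗ LinearMap.proj j)).compl₂ (LinearMap.proj i)

@[simp] theorem opMatForm_apply (x : Fin m → Fin m → (H →L[ℂ] H)) (v w : Fin m → H) :
    opMatForm x v w = ∑ i, ∑ j, ⟪x i j (v j), w i⟫_ℂ := by
  simp [opMatForm]

theorem opMatPos_iff_isNonneg (x : Fin m → Fin m → (H →L[ℂ] H)) :
    OpMatPos x ↔ (opMatForm x).IsNonneg := by
  simp [LinearMap.isNonneg_def, OpMatPos]

theorem opMatForm_star_mul [CompleteSpace H] (c : Fin m → (H →L[ℂ] H)) (v w : Fin m → H) :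
    opMatForm (fun i j => star (c i) * c j) v w = ⟪∑ j, c j (v j), ∑ i, c i (w i)⟫_ℂ := by
  simp_rw [opMatForm_apply, inner_sum, sum_inner, mul_apply_eq_comp,
    ContinuousLinearMap.star_eq_adjoint, ContinuousLinearMap.adjoint_inner_left]

theorem IsCPop.opMatPos_star_mul [CompleteSpace H] {S : Submodule ℂ (H →L[ℂ] H)}
    {φ : S →ₗ[ℂ] (H →L[ℂ] H)} (hφ : IsCPop S φ) (c : Fin m → (H →L[ℂ] H))
    (hc : ∀ i j, star (c i) * c j ∈ S) : OpMatPos (fun i j => φ ⟨star (c i) * c j, hc i j⟩) :=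
  hφ m _ <| (opMatPos_iff_isNonneg _).2
    ⟨fun v => (opMatForm_star_mul c v v).symm ▸ by simp⟩

end

section

variable {H : Type*} [NormedAddCommGroup H] [InnerProductSpace ℂ H] [CompleteSpace H]

theorem IsCPop.opMatForm_star_mul_apply_self_eq_zero {S : Submodule ℂ (H →L[ℂ] H)}
    {ϑ ω : S →ₗ[ℂ] (H →L[ℂ] H)} (hϑ : IsCPop S ϑ) (hω : IsCPop S ω) (hsum : ϑ + ω = S.subtype)
    {m : ℕ} (c : Fin m → (H →L[ℂ] H)) (hc : ∀ i j, star (c i) * c j ∈ S) {v : Fin m → H}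
    (hv : ∑ j, c j (v j) = 0) :
    opMatForm (fun i j => ϑ ⟨star (c i) * c j, hc i j⟩) v v = 0 := by
  have hϑv := ((opMatPos_iff_isNonneg _).1 (hϑ.opMatPos_star_mul c hc)).nonneg v
  have hωv := ((opMatPos_iff_isNonneg _).1 (hω.opMatPos_star_mul c hc)).nonneg v
  have hadd : opMatForm (fun i j => ϑ ⟨star (c i) * c j, hc i j⟩) v v
      + opMatForm (fun i j => ω ⟨star (c i) * c j, hc i j⟩) v v = 0 := by
    simp only [opMatForm_apply, ← Finset.sum_add_distrib, ← inner_add_left,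
      ← add_apply, ← LinearMap.add_apply, hsum, Submodule.subtype_apply]
    rw [← opMatForm_apply, opMatForm_star_mul, hv, inner_zero_left]
  exact le_antisymm (hadd ▸ le_add_of_nonneg_right hωv) hϑv

variable {B : StarSubalgebra ℂ (H →L[ℂ] H)} {ϑ ω : B.toSubalgebra.toSubmodule →ₗ[ℂ] (H →L[ℂ] H)}

theorem IsCPop.inner_apply_eq_of_add_eq_subtype (hϑ : IsCPop _ ϑ) (hω : IsCPop _ ω)
    (hsum : ϑ + ω = B.toSubalgebra.toSubmodule.subtype) {a : H →L[ℂ] H} (ha : a ∈ B) (ξ η : H) :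
    ⟪ϑ ⟨a, ha⟩ ξ, η⟫_ℂ = ⟪ϑ ⟨1, one_mem B⟩ (a ξ), η⟫_ℂ ∧
      ⟪ϑ ⟨star a, (star_mem ha : star a ∈ B)⟩ η, ξ⟫_ℂ = ⟪ϑ ⟨1, one_mem B⟩ η, a ξ⟫_ℂ := by
  let c : Fin 2 → H →L[ℂ] H := ![a, 1]
  have hc : ∀ i j, star (c i) * c j ∈ B.toSubalgebra.toSubmodule := by
    simp [Fin.forall_fin_two, c, ha, star_mem ha, mul_mem (star_mem ha) ha]
  have hv := opMatForm_star_mul_apply_self_eq_zero hϑ hω hsum c hc (v := ![ξ, -(a ξ)])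
    (by simp [c])
  simpa [c, Fin.sum_univ_two, ← sub_eq_add_neg, sub_eq_zero] using
    ((opMatPos_iff_isNonneg _).1 (hϑ.opMatPos_star_mul c hc)).apply_eq_zero_of_apply_self_eq_zero
      hv ![0, η]

theorem IsCPop.apply_eq_apply_one_mul (hϑ : IsCPop _ ϑ) (hω : IsCPop _ ω)
    (hsum : ϑ + ω = B.toSubalgebra.toSubmodule.subtype) {a : H →L[ℂ] H} (ha : a ∈ B) :
    ϑ ⟨a, ha⟩ = ϑ ⟨1, one_mem B⟩ * a := by
  ext ξ
  exact ext_inner_right ℂ fun η => (hϑ.inner_apply_eq_of_add_eq_subtype hω hsum ha ξ η).1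

theorem IsCPop.apply_star_eq_star_mul_apply_one (hϑ : IsCPop _ ϑ) (hω : IsCPop _ ω)
    (hsum : ϑ + ω = B.toSubalgebra.toSubmodule.subtype) {a : H →L[ℂ] H} (ha : a ∈ B) :
    ϑ ⟨star a, (star_mem ha : star a ∈ B)⟩ = star a * ϑ ⟨1, one_mem B⟩ := by
  ext η
  refine ext_inner_right ℂ fun ξ => ?_
  rw [mul_apply_eq_comp]
  exact (hϑ.inner_apply_eq_of_add_eq_subtype hω hsum ha ξ η).2.trans
    (ContinuousLinearMap.adjoint_inner_left a _ _).symm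

theorem IsCPop.apply_one_mul_comm (hϑ : IsCPop _ ϑ) (hω : IsCPop _ ω)
    (hsum : ϑ + ω = B.toSubalgebra.toSubmodule.subtype) {b : H →L[ℂ] H} (hb : b ∈ B) :
    ϑ ⟨1, one_mem B⟩ * b = b * ϑ ⟨1, one_mem B⟩ := by
  conv_rhs => rw [← star_star b]
  rw [← hϑ.apply_eq_apply_one_mul hω hsum hb,
    ← hϑ.apply_star_eq_star_mul_apply_one hω hsum (star_mem hb)]
  simp

theorem IsCPop.inner_apply_one_nonneg {φ : B.toSubalgebra.toSubmodule →ₗ[ℂ] (H →L[ℂ] H)}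
    (hφ : IsCPop _ φ) (η : H) : 0 ≤ ⟪φ ⟨1, one_mem B⟩ η, η⟫_ℂ := by
  simpa using hφ.opMatPos_star_mul ![1] (by simp) ![η]

end

theorem exists_nonneg_le_one_eq_ofReal_smul_one {H : Type*} [NormedAddCommGroup H]
    [InnerProductSpace ℂ H] {T : H →L[ℂ] H} {lam : ℂ} (hT : T = lam • 1)
    (h₀ : ∀ η, 0 ≤ ⟪T η, η⟫_ℂ) (h₁ : ∀ η, 0 ≤ ⟪(1 - T) η, η⟫_ℂ) :
    ∃ s : ℝ, 0 ≤ s ∧ s ≤ 1 ∧ T = (s : ℂ) • 1 := by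
  rcases subsingleton_or_nontrivial H with hH | hH
  · exact ⟨0, le_rfl, zero_le_one, Subsingleton.elim _ _⟩
  obtain ⟨η, hη⟩ := exists_norm_eq H zero_le_one
  have hinner (μ : ℂ) : ⟪(μ • 1 : H →L[ℂ] H) η, η⟫_ℂ = star μ := by
    simp [inner_self_eq_norm_sq_to_K, hη]
  have h0 : 0 ≤ lam := star_nonneg_iff.1 (hinner lam ▸ hT ▸ h₀ η)
  have h1 : 0 ≤ 1 - lam := by
    refine star_nonneg_iff.1 (hinner (1 - lam) ▸ ?_)
    simpa [hT, sub_smul] using h₁ η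
  obtain ⟨s, hs, rfl⟩ := RCLike.nonneg_iff_exists_ofReal.1 h0
  exact ⟨s, hs, Complex.real_le_real.1 (sub_nonneg.1 h1), hT⟩

theorem identity_map_on_irreducible_cstar_algebra_is_pure_general
    {H : Type*} [NormedAddCommGroup H] [InnerProductSpace ℂ H] [CompleteSpace H]
    (B : StarSubalgebra ℂ (H →L[ℂ] H))
    (hirr : ∀ c : H →L[ℂ] H, (∀ b ∈ B, c * b = b * c) → ∃ lam : ℂ, c = lam • 1) :
    ∀ ϑ ω : B.toSubalgebra.toSubmodule →ₗ[ℂ] (H →L[ℂ] H),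
      IsCPop B.toSubalgebra.toSubmodule ϑ → IsCPop B.toSubalgebra.toSubmodule ω →
      (∀ x, ϑ x ∈ B) → (∀ x, ω x ∈ B) →
      ϑ + ω = (Subalgebra.toSubmodule B.toSubalgebra).subtype →
      ∃ s : ℝ, 0 ≤ s ∧ s ≤ 1 ∧
        ϑ = (s : ℂ) • (Subalgebra.toSubmodule B.toSubalgebra).subtype ∧
        ω = ((1 - s : ℝ) : ℂ) • (Subalgebra.toSubmodule B.toSubalgebra).subtype := by
  intro ϑ ω hϑ hω _ _ hsum
  have hϑ_apply (x : B.toSubalgebra.toSubmodule) : ϑ x = ϑ ⟨1, one_mem B⟩ * x :=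
    hϑ.apply_eq_apply_one_mul hω hsum (x.2 : (x : H →L[ℂ] H) ∈ B)
  have hω_apply (x : B.toSubalgebra.toSubmodule) : ω x = x - ϑ x :=
    eq_sub_of_add_eq' (LinearMap.congr_fun hsum x)
  obtain ⟨lam, hlam⟩ := hirr _ fun b hb => hϑ.apply_one_mul_comm hω hsum hb
  obtain ⟨s, hs₀, hs₁, hs⟩ := exists_nonneg_le_one_eq_ofReal_smul_one hlam hϑ.inner_apply_one_nonneg
    fun η => by simpa [hω_apply] using hω.inner_apply_one_nonneg η
  refine ⟨s, hs₀, hs₁, ?_, ?_⟩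
  · ext1 x
    simp [hϑ_apply x, hs]
  · ext1 x
    simp [hω_apply, hϑ_apply x, hs, sub_smul]

/-- If `B ⊆ B(H)` is a unital closed *-subalgebra acting irreducibly on `H`, then the
identity map of `B` is pure in the cone `CP(B, B)`.  (Maps `B → B` are formalised as
maps `B → B(H)` whose values lie in `B`; the identity map is the inclusion
`B.toSubalgebra.toSubmodule.subtype`.) -/
theorem identity_map_on_irreducible_cstar_algebra_is_pure
    {H : Type*} [NormedAddCommGroup H] [InnerProductSpace ℂ H] [CompleteSpace H]
    (B : StarSubalgebra ℂ (H →L[ℂ] H)) (hBclosed : IsClosed (B : Set (H →L[ℂ] H)))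
    (hirr : ∀ c : H →L[ℂ] H, (∀ b ∈ B, c * b = b * c) → ∃ lam : ℂ, c = lam • 1) :
    ∀ ϑ ω : B.toSubalgebra.toSubmodule →ₗ[ℂ] (H →L[ℂ] H),
      IsCPop B.toSubalgebra.toSubmodule ϑ → IsCPop B.toSubalgebra.toSubmodule ω →
      (∀ x, ϑ x ∈ B) → (∀ x, ω x ∈ B) →
      ϑ + ω = (Subalgebra.toSubmodule B.toSubalgebra).subtype →
      ∃ s : ℝ, 0 ≤ s ∧ s ≤ 1 ∧
        ϑ = (s : ℂ) • (Subalgebra.toSubmodule B.toSubalgebra).subtype ∧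
        ω = ((1 - s : ℝ) : ℂ) • (Subalgebra.toSubmodule B.toSubalgebra).subtype :=
  identity_map_on_irreducible_cstar_algebra_is_pure_general B hirr
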